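/- Let D be the Dirac operator with Dirichlet boundary conditions on Ω, let P be the orthogonal projection of L₂(Ω) onto the closed subspace of solutions u ∈ L₂(Ω) of the Helmholtz equation (1−Δ)u = 0 (in the distributional sense), and set T := (1+D*D)^{-1} − (1+DD*)^{-1}. Then T = (1⊗P)T. -/

import Mathlib

set_option synthInstance.maxHeartbeats 400000
set_option maxHeartbeats 1000000

noncomputable section

open MeasureTheory Filter

namespace NCGD

/-! ### Singular values and operator ideals (on an abstract Hilbert space) -/

variable {H : Type*} [NormedAddCommGroup H] [InnerProductSpace ℂ H] [CompleteSpace H]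

/-- The `n`-th singular value (approximation number) of a bounded operator. -/
def sval (T : H →L[ℂ] H) (n : ℕ) : ℝ :=
  sInf {c : ℝ | ∃ R : H →L[ℂ] H,
    Module.rank ℂ (LinearMap.range (R : H →ₗ[ℂ] H)) ≤ (n : Cardinal) ∧ ‖T - R‖ = c}

/-- The weak Schatten ideal `𝓛_{p,∞}`. -/
def MemLpW (p : ℝ) (T : H →L[ℂ] H) : Prop :=
  IsCompactOperator T ∧ ∃ C : ℝ, ∀ n : ℕ, sval T n ≤ C * ((n : ℝ) + 1) ^ (-(1 / p))

/-- The Schatten class `𝓛_s`. -/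
def MemSchatten (s : ℝ) (T : H →L[ℂ] H) : Prop :=
  IsCompactOperator T ∧ Summable (fun n => sval T n ^ s)

/-! ### The setting: test functions and weak derivatives on a domain `Ω ⊆ ℝ^d` -/

variable (d N : ℕ)

/-- Euclidean space `ℝ^d`. -/
abbrev E (d : ℕ) := EuclideanSpace ℝ (Fin d)

/-- The spinor fibre `ℂ^N`. -/
abbrev V (N : ℕ) := EuclideanSpace ℂ (Fin N)

/-- The Hilbert space `L₂(Ω, ℂ^N)`. -/
abbrev Hsp (Ω : Set (E d)) := Lp (V N) 2 (volume.restrict Ω)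

variable {d N}

/-- A (vector-valued) test function on `Ω`: smooth, compactly supported inside `Ω`. -/
def IsTestFun {W : Type*} [NormedAddCommGroup W] [NormedSpace ℝ W] (Ω : Set (E d))
    (φ : E d → W) : Prop :=
  ContDiff ℝ (⊤ : ℕ∞) φ ∧ HasCompactSupport φ ∧ tsupport φ ⊆ Ω

/-- The Dirac operator `𝒟 = Σⱼ −i γⱼ ⊗ ∂ⱼ` applied to a differentiable function. -/
def diracOp (γ : Fin d → Matrix (Fin N) (Fin N) ℂ) (φ : E d → V N) : E d → V N := fun x =>
  ∑ j : Fin d, (-Complex.I) •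
    Matrix.toEuclideanLin (γ j) (fderiv ℝ φ x (EuclideanSpace.single j 1))

/-- The Laplacian `Δ = Σⱼ ∂ⱼ²` applied to a twice differentiable function. -/
def lapOp (φ : E d → V N) : E d → V N := fun x =>
  ∑ j : Fin d, fderiv ℝ (fun y => fderiv ℝ φ y (EuclideanSpace.single j 1)) x
    (EuclideanSpace.single j 1)

/-- The family `γ` consists of Euclidean gamma matrices: Hermitian, with
`γⱼγₖ + γₖγⱼ = 2δⱼₖ`. -/
def IsGammaFamily (γ : Fin d → Matrix (Fin N) (Fin N) ℂ) : Prop :=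
  (∀ j, (γ j).IsHermitian) ∧
    ∀ j k, γ j * γ k + γ k * γ j =
      if j = k then (2 : Matrix (Fin N) (Fin N) ℂ) else 0

variable (Ω : Set (E d))

/-- `v = 𝒟 u` distributionally on `Ω` (tested against the formally self-adjoint `𝒟`). -/
def IsWeakDirac (γ : Fin d → Matrix (Fin N) (Fin N) ℂ) (u v : E d → V N) : Prop :=
  ∀ φ : E d → V N, IsTestFun Ω φ →
    ∫ x in Ω, (inner ℂ (diracOp γ φ x) (u x) : ℂ) = ∫ x in Ω, (inner ℂ (φ x) (v x) : ℂ)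

/-- `v = ∂ⱼ u` distributionally on `Ω`. -/
def IsWeakDeriv (j : Fin d) (u v : E d → V N) : Prop :=
  ∀ φ : E d → V N, IsTestFun Ω φ →
    ∫ x in Ω, (inner ℂ (fderiv ℝ φ x (EuclideanSpace.single j 1)) (u x) : ℂ) =
      -∫ x in Ω, (inner ℂ (φ x) (v x) : ℂ)

/-- `w = −Δ u` distributionally on `Ω`. -/
def IsWeakNegLap (u w : E d → V N) : Prop :=
  ∀ φ : E d → V N, IsTestFun Ω φ →
    -∫ x in Ω, (inner ℂ (lapOp φ x) (u x) : ℂ) = ∫ x in Ω, (inner ℂ (φ x) (w x) : ℂ)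

/-- `u ∈ W^{1,2}(Ω, ℂ^N)`: all first order weak derivatives lie in `L₂`. -/
def MemW12 (u : Hsp d N Ω) : Prop :=
  ∀ j : Fin d, ∃ v : Hsp d N Ω, IsWeakDeriv Ω j ⇑u ⇑v

/-- `u ∈ W^{1,2}₀(Ω, ℂ^N)`: `u ∈ W^{1,2}` and `u` is a limit of test functions in the
`W^{1,2}`-norm. -/
def MemW120 (u : Hsp d N Ω) : Prop :=
  ∃ v : Fin d → Hsp d N Ω, (∀ j, IsWeakDeriv Ω j ⇑u ⇑(v j)) ∧
    ∃ φ : ℕ → E d → V N, (∀ n, IsTestFun Ω (φ n)) ∧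
      Tendsto (fun n => ∫ x in Ω, ‖φ n x - u x‖ ^ 2) atTop (nhds 0) ∧
      ∀ j : Fin d, Tendsto (fun n =>
          ∫ x in Ω, ‖fderiv ℝ (φ n) x (EuclideanSpace.single j 1) - (v j) x‖ ^ 2)
        atTop (nhds 0)

/-- `u ∈ W^{2,2}(Ω, ℂ^N)`: weak derivatives up to order two lie in `L₂`. -/
def MemW22 (u : Hsp d N Ω) : Prop :=
  ∀ j : Fin d, ∃ v : Hsp d N Ω, IsWeakDeriv Ω j ⇑u ⇑v ∧
    ∀ k : Fin d, ∃ w : Hsp d N Ω, IsWeakDeriv Ω k ⇑v ⇑w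

/-- `u ∈ W^{1,2}_loc(Ω, ℂ^N)`. -/
def MemW12loc (u : Hsp d N Ω) : Prop :=
  ∀ j : Fin d, ∃ g : E d → V N, IsWeakDeriv Ω j ⇑u g ∧
    ∀ K : Set (E d), IsCompact K → K ⊆ Ω → MemLp g 2 (volume.restrict K)

/-- `u` lies in the domain of the Dirac operator `D` with Dirichlet boundary conditions
(`dom D = W^{1,2}₀`), with `D u = w`. -/
def InDomD (γ : Fin d → Matrix (Fin N) (Fin N) ℂ) (u w : Hsp d N Ω) : Prop :=
  MemW120 Ω u ∧ IsWeakDirac Ω γ ⇑u ⇑w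

/-- `u` lies in the domain of the adjoint `D*`, with `D* u = w`: for all `v ∈ dom D`,
`⟪D v, u⟫ = ⟪v, w⟫`. -/
def InDomDadj (γ : Fin d → Matrix (Fin N) (Fin N) ℂ) (u w : Hsp d N Ω) : Prop :=
  ∀ v z : Hsp d N Ω, InDomD Ω γ v z → (inner ℂ z u : ℂ) = inner ℂ v w

/-- `R = (1 + D*D)⁻¹`. -/
def IsRes1DstarD (γ : Fin d → Matrix (Fin N) (Fin N) ℂ)
    (R : Hsp d N Ω →L[ℂ] Hsp d N Ω) : Prop :=
  ∀ ξ : Hsp d N Ω, ∃ w z : Hsp d N Ω,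
    InDomD Ω γ (R ξ) w ∧ InDomDadj Ω γ w z ∧ R ξ + z = ξ

/-- `R = (1 + DD*)⁻¹`. -/
def IsRes1DDstar (γ : Fin d → Matrix (Fin N) (Fin N) ℂ)
    (R : Hsp d N Ω →L[ℂ] Hsp d N Ω) : Prop :=
  ∀ ξ : Hsp d N Ω, ∃ w z : Hsp d N Ω,
    InDomDadj Ω γ (R ξ) w ∧ InDomD Ω γ w z ∧ R ξ + z = ξ

/-- `M` is the operator `1 ⊗ M_f` of pointwise multiplication by `f`. -/
def IsMulOp (f : E d → ℂ) (M : Hsp d N Ω →L[ℂ] Hsp d N Ω) : Prop :=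
  ∀ u : Hsp d N Ω, ⇑(M u) =ᵐ[volume.restrict Ω] fun x => f x • (u x : V N)

end NCGD

open NCGD MeasureTheory in
/-- `u ∈ L₂(Ω, ℂ^N)` solves the Helmholtz equation `(1 − Δ)u = 0` distributionally. -/
def NCGD.IsHelmholtz {d N : ℕ} (Ω : Set (E d)) (u : Hsp d N Ω) : Prop :=
  ∀ φ : E d → V N, IsTestFun Ω φ →
    ∫ x in Ω, (inner ℂ (φ x - lapOp φ x) ((u : E d → V N) x) : ℂ) = 0

/-!
If `u = (1 + D*D)⁻¹ ξ`, then `u ∈ dom D` and `ξ = u + D*(D u)`. Test functions lie in `dom D`,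
where `D` acts as the formally symmetric differential operator `𝒟 = Σⱼ -i γⱼ ∂ⱼ`; hence `D*` also
acts as `𝒟` distributionally, and `ξ = u + 𝒟²u` in the sense of distributions. The Clifford
relations `γⱼγₖ + γₖγⱼ = 2δⱼₖ` together with the symmetry of second derivatives give `𝒟² = -Δ`,
so `(1 - Δ)u = ξ` distributionally. The same argument applies to `(1 + DD*)⁻¹ ξ`, so the
difference `Tξ` solves the Helmholtz equation and is fixed by `P`.
-/

theorem sum_sum_apply_apply_eq_neg_sum_diag {ι M F : Type*} [Fintype ι] [DecidableEq ι]
    [AddCommGroup M] [Module ℝ M] [FunLike F M M] [AddMonoidHomClass F M M]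
    (A : ι → F) (hA : ∀ j l v, A j (A l v) + A l (A j v) = if j = l then -(v + v) else 0)
    (B : ι → ι → M) (hB : ∀ j l, B j l = B l j) :
    ∑ j, ∑ l, A j (A l (B j l)) = -∑ j, B j j := by
  set S := ∑ j, ∑ l, A j (A l (B j l))
  have hswap : S = ∑ j, ∑ l, A l (A j (B j l)) := by
    rw [Finset.sum_comm]
    exact Finset.sum_congr rfl fun j _ => Finset.sum_congr rfl fun l _ => by rw [hB]
  have h2S : (2 : ℝ) • S = (2 : ℝ) • -∑ j, B j j :=
    calc (2 : ℝ) • S = ∑ j, ∑ l, (A j (A l (B j l)) + A l (A j (B j l))) := by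
          rw [two_smul]
          nth_rewrite 2 [hswap]
          simp only [S, ← Finset.sum_add_distrib]
      _ = (2 : ℝ) • -∑ j, B j j := by
          simp only [hA, Finset.sum_ite_eq, Finset.mem_univ, if_true, Finset.sum_neg_distrib,
            Finset.sum_add_distrib, two_smul, neg_add]
  exact smul_right_injective M two_ne_zero h2S

theorem fderiv_clm_comp_apply {E F G : Type*} [NormedAddCommGroup E] [NormedSpace ℝ E]
    [NormedAddCommGroup F] [NormedSpace ℝ F] [NormedAddCommGroup G] [NormedSpace ℝ G]
    (L : F →L[ℝ] G) {f : E → F} {x : E} (hf : DifferentiableAt ℝ f x) (v : E) :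
    fderiv ℝ (fun y => L (f y)) x v = L (fderiv ℝ f x v) := by
  rw [fderiv_fun_comp x L.differentiableAt hf, L.fderiv]
  rfl

theorem ContDiff.differentiable_fderiv {E F : Type*} [NormedAddCommGroup E] [NormedSpace ℝ E]
    [NormedAddCommGroup F] [NormedSpace ℝ F] {f : E → F} (hf : ContDiff ℝ 2 f) :
    Differentiable ℝ (fderiv ℝ f) :=
  (hf.fderiv_right (m := 1) (by norm_num)).differentiable one_ne_zero

namespace MeasureTheory

variable {α F : Type*} [MeasurableSpace α] {μ : Measure α} [NormedAddCommGroup F] {g : α → F}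

theorem MemLp.integral_norm_sub_toLp_sq {p : ENNReal} (hg : MemLp g p μ) :
    ∫ a, ‖g a - hg.toLp g a‖ ^ 2 ∂μ = 0 :=
  integral_eq_zero_of_ae (by filter_upwards [hg.coeFn_toLp] with a ha; simp [ha])

variable [InnerProductSpace ℂ F]

theorem MemLp.integrable_inner_L2 (hg : MemLp g 2 μ) (u : Lp F 2 μ) :
    Integrable (fun a => inner ℂ (g a) (u a)) μ :=
  (L2.integrable_inner (hg.toLp g) u).congr
    (by filter_upwards [hg.coeFn_toLp] with a ha; rw [ha])

theorem MemLp.inner_toLp_left (hg : MemLp g 2 μ) (u : Lp F 2 μ) :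
    inner ℂ (hg.toLp g) u = ∫ a, inner ℂ (g a) (u a) ∂μ := by
  rw [L2.inner_def]
  exact integral_congr_ae (by filter_upwards [hg.coeFn_toLp] with a ha; rw [ha])

theorem MemLp.integral_inner_toLp_right (f : α → F) (hg : MemLp g 2 μ) :
    ∫ a, inner ℂ (f a) (hg.toLp g a) ∂μ = ∫ a, inner ℂ (f a) (g a) ∂μ :=
  integral_congr_ae (by filter_upwards [hg.coeFn_toLp] with a ha; rw [ha])

end MeasureTheory

namespace NCGD

variable {d N : ℕ} {Ω : Set (E d)}

local notation "e" j => EuclideanSpace.single j (1 : ℝ)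

section TestFunction

variable {W W' : Type*} [NormedAddCommGroup W] [NormedSpace ℝ W]
  [NormedAddCommGroup W'] [NormedSpace ℝ W']

theorem IsTestFun.of_tsupport_subset {φ : E d → W} {ψ : E d → W'} (hφ : IsTestFun Ω φ)
    (hψ : ContDiff ℝ (⊤ : ℕ∞) ψ) (h : tsupport ψ ⊆ tsupport φ) : IsTestFun Ω ψ :=
  ⟨hψ, hφ.2.1.of_isClosed_subset (isClosed_tsupport ψ) h, h.trans hφ.2.2⟩

theorem IsTestFun.comp_fderiv {φ : E d → W} (hφ : IsTestFun Ω φ)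
    (L : (E d →L[ℝ] W) →L[ℝ] W') : IsTestFun Ω (fun x => L (fderiv ℝ φ x)) :=
  hφ.of_tsupport_subset (L.contDiff.comp (hφ.1.fderiv_right le_rfl))
    ((tsupport_comp_subset (map_zero L) _).trans (tsupport_fderiv_subset ℝ))

theorem IsTestFun.fderiv_apply {φ : E d → W} (hφ : IsTestFun Ω φ) (v : E d) :
    IsTestFun Ω (fun x => fderiv ℝ φ x v) :=
  hφ.comp_fderiv (ContinuousLinearMap.apply ℝ W v)

theorem IsTestFun.contDiff {φ : E d → W} (hφ : IsTestFun Ω φ) (n : ℕ) : ContDiff ℝ n φ :=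
  hφ.1.of_le (WithTop.coe_le_coe.2 le_top)

theorem IsTestFun.memLp {φ : E d → W} (hφ : IsTestFun Ω φ) (p : ENNReal) :
    MemLp φ p (volume.restrict Ω) :=
  (hφ.1.continuous.memLp_of_hasCompactSupport hφ.2.1).restrict Ω

end TestFunction

def diracCoeff (γ : Fin d → Matrix (Fin N) (Fin N) ℂ) (j : Fin d) : V N →L[ℝ] V N :=
  ((-Complex.I) • Matrix.toEuclideanCLM (𝕜 := ℂ) (γ j)).restrictScalars ℝ

theorem diracCoeff_apply (γ : Fin d → Matrix (Fin N) (Fin N) ℂ) (j : Fin d) (v : V N) :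
    diracCoeff γ j v = (-Complex.I) • Matrix.toEuclideanLin (γ j) v :=
  rfl

theorem inner_diracCoeff_left {γ : Fin d → Matrix (Fin N) (Fin N) ℂ} (hγ : IsGammaFamily γ)
    (j : Fin d) (v w : V N) :
    inner ℂ (diracCoeff γ j v) w = -inner ℂ v (diracCoeff γ j w) := by
  simp [diracCoeff_apply, inner_smul_left, inner_smul_right,
    Matrix.isSymmetric_toEuclideanLin_iff.mpr (hγ.1 j) v w]

theorem diracCoeff_anticomm {γ : Fin d → Matrix (Fin N) (Fin N) ℂ} (hγ : IsGammaFamily γ)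
    (j l : Fin d) (v : V N) :
    diracCoeff γ j (diracCoeff γ l v) + diracCoeff γ l (diracCoeff γ j v) =
      if j = l then -(v + v) else 0 := by
  have h := congrArg (fun A => Matrix.toEuclideanCLM (𝕜 := ℂ) A v) (hγ.2 j l)
  simp only [map_add, map_mul, add_apply, mul_apply_eq_comp] at h
  simp only [diracCoeff, ContinuousLinearMap.coe_restrictScalars', smul_apply,
    map_smul, smul_smul, ← smul_add, h]
  split_ifs <;> simp [map_ofNat, two_smul]

def diracSymbol (γ : Fin d → Matrix (Fin N) (Fin N) ℂ) : (E d →L[ℝ] V N) →L[ℝ] V N :=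
  ∑ j, (diracCoeff γ j).comp (ContinuousLinearMap.apply ℝ (V N) (e j))

theorem diracOp_eq_diracSymbol (γ : Fin d → Matrix (Fin N) (Fin N) ℂ) (φ : E d → V N) :
    diracOp γ φ = fun x => diracSymbol γ (fderiv ℝ φ x) := by
  ext x : 1
  simp [diracOp, diracSymbol, diracCoeff_apply]

theorem diracOp_apply (γ : Fin d → Matrix (Fin N) (Fin N) ℂ) (φ : E d → V N) (x : E d) :
    diracOp γ φ x = ∑ j, diracCoeff γ j (fderiv ℝ φ x (e j)) := by
  simp [diracOp_eq_diracSymbol, diracSymbol]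

theorem IsTestFun.diracOp (γ : Fin d → Matrix (Fin N) (Fin N) ℂ) {φ : E d → V N}
    (hφ : IsTestFun Ω φ) : IsTestFun Ω (diracOp γ φ) := by
  rw [diracOp_eq_diracSymbol]
  exact hφ.comp_fderiv _

theorem lapOp_apply {φ : E d → V N} {x : E d} (hφ : DifferentiableAt ℝ (fderiv ℝ φ) x) :
    lapOp φ x = ∑ j, fderiv ℝ (fderiv ℝ φ) x (e j) (e j) :=
  Finset.sum_congr rfl fun j _ => fderiv_clm_comp_apply (.apply ℝ (V N) (e j)) hφ (e j)

theorem IsTestFun.lapOp {φ : E d → V N} (hφ : IsTestFun Ω φ) : IsTestFun Ω (lapOp φ) := by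
  have hφ' := (hφ.contDiff 2).differentiable_fderiv
  have hlap : NCGD.lapOp φ = fun x =>
      (∑ j, (ContinuousLinearMap.apply ℝ (V N) (e j)).comp
        (ContinuousLinearMap.apply ℝ (E d →L[ℝ] V N) (e j))) (fderiv ℝ (fderiv ℝ φ) x) := by
    ext x : 1
    simp [lapOp_apply (hφ' x), sum_apply]
  rw [hlap]
  exact (hφ.comp_fderiv (.id ℝ _)).comp_fderiv _

theorem diracOp_diracOp {γ : Fin d → Matrix (Fin N) (Fin N) ℂ} (hγ : IsGammaFamily γ)
    {φ : E d → V N} (hφ : ContDiff ℝ 2 φ) (x : E d) :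
    diracOp γ (diracOp γ φ) x = -lapOp φ x := by
  have hφ' := hφ.differentiable_fderiv
  have hsymm : IsSymmSndFDerivAt ℝ φ x := hφ.contDiffAt.isSymmSndFDerivAt (by simp)
  rw [lapOp_apply (hφ' x), ← sum_sum_apply_apply_eq_neg_sum_diag (diracCoeff γ)
    (diracCoeff_anticomm hγ) _ fun j l => hsymm (e j) (e l), diracOp_apply]
  refine Finset.sum_congr rfl fun j _ => ?_
  rw [diracOp_eq_diracSymbol, fderiv_clm_comp_apply _ (hφ' x)]
  simp [diracSymbol]

section IntegrationByParts

variable {F : Type*} [NormedAddCommGroup F] [InnerProductSpace ℂ F]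

theorem integrable_inner_of_hasCompactSupport_left {f g : E d → F} (hf : Continuous f)
    (hg : Continuous g) (hfc : HasCompactSupport f) :
    Integrable (fun x => inner ℂ (f x) (g x)) :=
  (hf.inner hg).integrable_of_hasCompactSupport
    (hfc.mono' fun x hx => subset_tsupport f fun h => hx (by simp [h]))

theorem integral_inner_fderiv_apply_left [NormedSpace ℝ F] [IsScalarTower ℝ ℂ F]
    {ψ u : E d → F} (hψ : IsTestFun Ω ψ) (hu : ContDiff ℝ 1 u) (v : E d) :
    ∫ x in Ω, inner ℂ (fderiv ℝ ψ x v) (u x) = -∫ x in Ω, inner ℂ (ψ x) (fderiv ℝ u x v) := by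
  have hψ' : IsTestFun Ω (fun x => fderiv ℝ ψ x v) := hψ.fderiv_apply v
  have hu' : Continuous (fun x => fderiv ℝ u x v) :=
    (hu.continuous_fderiv one_ne_zero).clm_apply continuous_const
  rw [setIntegral_eq_integral_of_forall_compl_eq_zero fun x hx => by
      simp [image_eq_zero_of_notMem_tsupport fun h => hx (hψ'.2.2 h)],
    setIntegral_eq_integral_of_forall_compl_eq_zero fun x hx => by
      simp [image_eq_zero_of_notMem_tsupport fun h => hx (hψ.2.2 h)]]
  have key := integral_bilinear_fderiv_right_eq_neg_left_of_integrable
    (B := (isBoundedBilinearMap_inner (𝕜 := ℂ) (E := F)).toContinuousLinearMap)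
    (integrable_inner_of_hasCompactSupport_left hψ'.1.continuous hu.continuous hψ'.2.1)
    (integrable_inner_of_hasCompactSupport_left hψ.1.continuous hu' hψ.2.1)
    (integrable_inner_of_hasCompactSupport_left hψ.1.continuous hu.continuous hψ.2.1)
    (fun x _ => hψ.1.differentiable (by simp) x)
    (fun x _ => hu.differentiable one_ne_zero x)
  simp only [IsBoundedBilinearMap.toContinuousLinearMap_apply] at key
  rw [key, neg_neg]

theorem integral_inner_skewAdjoint_fderiv_apply_left [NormedSpace ℝ F] [IsScalarTower ℝ ℂ F]
    (A : F →L[ℝ] F) (hA : ∀ a b, inner ℂ (A a) b = -inner ℂ a (A b)) {ψ u : E d → F}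
    (hψ : IsTestFun Ω ψ) (hu : ContDiff ℝ 1 u) (v : E d) :
    ∫ x in Ω, inner ℂ (A (fderiv ℝ ψ x v)) (u x) =
      ∫ x in Ω, inner ℂ (ψ x) (A (fderiv ℝ u x v)) :=
  calc ∫ x in Ω, inner ℂ (A (fderiv ℝ ψ x v)) (u x)
      = -∫ x in Ω, inner ℂ (fderiv ℝ ψ x v) (A (u x)) := by simp_rw [hA, integral_neg]
    _ = ∫ x in Ω, inner ℂ (ψ x) (fderiv ℝ (fun y => A (u y)) x v) := by
      rw [integral_inner_fderiv_apply_left (u := fun y => A (u y)) hψ (A.contDiff.comp hu),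
        neg_neg]
    _ = ∫ x in Ω, inner ℂ (ψ x) (A (fderiv ℝ u x v)) := by
      simp_rw [fderiv_clm_comp_apply A (hu.differentiable one_ne_zero _)]

end IntegrationByParts

theorem integral_inner_diracOp_left {γ : Fin d → Matrix (Fin N) (Fin N) ℂ}
    (hγ : IsGammaFamily γ) {ψ u : E d → V N} (hψ : IsTestFun Ω ψ) (hu : ContDiff ℝ 1 u) :
    ∫ x in Ω, inner ℂ (diracOp γ ψ x) (u x) = ∫ x in Ω, inner ℂ (ψ x) (diracOp γ u x) := by
  have hu' : Continuous (fderiv ℝ u) := hu.continuous_fderiv one_ne_zero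
  simp_rw [diracOp_apply, sum_inner, inner_sum]
  rw [integral_finsetSum, integral_finsetSum]
  · exact Finset.sum_congr rfl fun j _ =>
      integral_inner_skewAdjoint_fderiv_apply_left _ (inner_diracCoeff_left hγ j) hψ hu (e j)
  · exact fun j _ => (integrable_inner_of_hasCompactSupport_left hψ.1.continuous
      ((diracCoeff γ j).continuous.comp (hu'.clm_apply continuous_const)) hψ.2.1).restrict
  · exact fun j _ => (integrable_inner_of_hasCompactSupport_left
      ((diracCoeff γ j).continuous.comp (hψ.fderiv_apply (e j)).1.continuous) hu.continuous
      ((hψ.fderiv_apply (e j)).2.1.comp_left (map_zero _))).restrict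

theorem memW120_toLp {φ : E d → V N} (hφ : IsTestFun Ω φ) :
    MemW120 Ω ((hφ.memLp 2).toLp φ) := by
  have hφ' := fun j => (hφ.fderiv_apply (e j)).memLp 2
  refine ⟨fun j => (hφ' j).toLp _, fun j ψ hψ => ?_, fun _ => φ, fun _ => hφ, ?_, fun j => ?_⟩
  · rw [MemLp.integral_inner_toLp_right, MemLp.integral_inner_toLp_right]
    exact integral_inner_fderiv_apply_left hψ (hφ.contDiff 1) (e j)
  · exact tendsto_const_nhds.congr fun _ => ((hφ.memLp 2).integral_norm_sub_toLp_sq).symm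
  · exact tendsto_const_nhds.congr fun _ => ((hφ' j).integral_norm_sub_toLp_sq).symm

theorem inDomD_toLp {γ : Fin d → Matrix (Fin N) (Fin N) ℂ} (hγ : IsGammaFamily γ)
    {φ : E d → V N} (hφ : IsTestFun Ω φ) :
    InDomD Ω γ ((hφ.memLp 2).toLp φ) (((hφ.diracOp γ).memLp 2).toLp (diracOp γ φ)) := by
  refine ⟨memW120_toLp hφ, fun ψ hψ => ?_⟩
  rw [MemLp.integral_inner_toLp_right, MemLp.integral_inner_toLp_right]
  exact integral_inner_diracOp_left hγ hψ (hφ.contDiff 1)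

theorem IsWeakDirac.of_inDomDadj {γ : Fin d → Matrix (Fin N) (Fin N) ℂ} (hγ : IsGammaFamily γ)
    {u w : Hsp d N Ω} (h : InDomDadj Ω γ u w) : IsWeakDirac Ω γ u w := fun ψ hψ => by
  simpa only [MemLp.inner_toLp_left] using h _ _ (inDomD_toLp hγ hψ)

def IsWeakOneSubLap (Ω : Set (E d)) (u v : E d → V N) : Prop :=
  ∀ φ : E d → V N, IsTestFun Ω φ →
    ∫ x in Ω, inner ℂ (φ x - lapOp φ x) (u x) = ∫ x in Ω, inner ℂ (φ x) (v x)

theorem isWeakOneSubLap_of_isWeakDirac {γ : Fin d → Matrix (Fin N) (Fin N) ℂ}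
    (hγ : IsGammaFamily γ) {u w z : Hsp d N Ω} (hu : IsWeakDirac Ω γ u w)
    (hw : IsWeakDirac Ω γ w z) : IsWeakOneSubLap Ω u ⇑(u + z) := fun φ hφ =>
  have hφu := (hφ.memLp 2).integrable_inner_L2
  calc ∫ x in Ω, inner ℂ (φ x - lapOp φ x) (u x)
      = ∫ x in Ω, (inner ℂ (φ x) (u x) + inner ℂ (diracOp γ (diracOp γ φ) x) (u x)) := by
        simp_rw [diracOp_diracOp hγ (hφ.contDiff 2), sub_eq_add_neg, inner_add_left]
    _ = (∫ x in Ω, inner ℂ (φ x) (u x)) + ∫ x in Ω, inner ℂ (φ x) (z x) := by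
        rw [integral_add (hφu u) ((((hφ.diracOp γ).diracOp γ).memLp 2).integrable_inner_L2 u),
          hu _ (hφ.diracOp γ), hw _ hφ]
    _ = ∫ x in Ω, inner ℂ (φ x) ((u + z) x) := by
        rw [← integral_add (hφu u) (hφu z)]
        exact integral_congr_ae (by
          filter_upwards [Lp.coeFn_add u z] with x hx
          rw [hx, Pi.add_apply, inner_add_right])

theorem IsRes1DstarD.isWeakOneSubLap {γ : Fin d → Matrix (Fin N) (Fin N) ℂ}
    (hγ : IsGammaFamily γ) {R : Hsp d N Ω →L[ℂ] Hsp d N Ω} (hR : IsRes1DstarD Ω γ R)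
    (ξ : Hsp d N Ω) : IsWeakOneSubLap Ω (R ξ) ξ := by
  obtain ⟨w, z, hDw, hDadjz, hsum⟩ := hR ξ
  simpa only [hsum] using
    isWeakOneSubLap_of_isWeakDirac hγ hDw.2 (IsWeakDirac.of_inDomDadj hγ hDadjz)

theorem IsRes1DDstar.isWeakOneSubLap {γ : Fin d → Matrix (Fin N) (Fin N) ℂ}
    (hγ : IsGammaFamily γ) {R : Hsp d N Ω →L[ℂ] Hsp d N Ω} (hR : IsRes1DDstar Ω γ R)
    (ξ : Hsp d N Ω) : IsWeakOneSubLap Ω (R ξ) ξ := by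
  obtain ⟨w, z, hDadjw, hDz, hsum⟩ := hR ξ
  simpa only [hsum] using
    isWeakOneSubLap_of_isWeakDirac hγ (IsWeakDirac.of_inDomDadj hγ hDadjw) hDz.2

theorem IsWeakOneSubLap.isHelmholtz_sub {u v : Hsp d N Ω} {ξ : E d → V N}
    (hu : IsWeakOneSubLap Ω u ξ) (hv : IsWeakOneSubLap Ω v ξ) : IsHelmholtz Ω (u - v) :=
  fun φ hφ =>
  have hint : ∀ w : Hsp d N Ω,
      Integrable (fun x => inner ℂ (φ x - lapOp φ x) (w x)) (volume.restrict Ω) :=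
    ((hφ.memLp 2).sub (hφ.lapOp.memLp 2)).integrable_inner_L2
  calc ∫ x in Ω, inner ℂ (φ x - lapOp φ x) ((u - v : Hsp d N Ω) x)
      = (∫ x in Ω, inner ℂ (φ x - lapOp φ x) (u x)) -
          ∫ x in Ω, inner ℂ (φ x - lapOp φ x) (v x) := by
        rw [← integral_sub (hint u) (hint v)]
        exact integral_congr_ae (by
          filter_upwards [Lp.coeFn_sub u v] with x hx
          rw [hx, Pi.sub_apply, inner_sub_right])
    _ = 0 := by rw [hu φ hφ, hv φ hφ, sub_self]

end NCGD

open NCGD MeasureTheory in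
theorem stmt17_general (d N : ℕ)
    (γ : Fin d → Matrix (Fin N) (Fin N) ℂ) (hγ : IsGammaFamily γ)
    (Ω : Set (E d))
    (P : Hsp d N Ω →L[ℂ] Hsp d N Ω)
    (hPfix : ∀ v : Hsp d N Ω, IsHelmholtz Ω v → P v = v)
    (Rd : Hsp d N Ω →L[ℂ] Hsp d N Ω) (hRd : IsRes1DstarD Ω γ Rd)
    (Rds : Hsp d N Ω →L[ℂ] Hsp d N Ω) (hRds : IsRes1DDstar Ω γ Rds) :
    Rd - Rds = P * (Rd - Rds) := by
  ext1 ξ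
  have hT : IsHelmholtz Ω (Rd ξ - Rds ξ) :=
    (hRd.isWeakOneSubLap hγ ξ).isHelmholtz_sub (hRds.isWeakOneSubLap hγ ξ)
  exact (hPfix _ hT).symm

open NCGD MeasureTheory in
/-- Let `D` be the Dirichlet Dirac operator on `Ω`, `P` the orthogonal
projection of `L₂` onto the (closed) subspace of solutions of the Helmholtz equation
`(1−Δ)u = 0`, and `T := (1+D*D)^{-1} − (1+DD*)^{-1}`.  Then `T = (1⊗P)T`. -/
theorem stmt17 (d N : ℕ) (hd : 2 ≤ d) (hN : N = 2 ^ (d / 2))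
    (γ : Fin d → Matrix (Fin N) (Fin N) ℂ) (hγ : IsGammaFamily γ)
    (Ω : Set (E d)) (hΩ : IsOpen Ω)
    (P : Hsp d N Ω →L[ℂ] Hsp d N Ω) (hP : IsSelfAdjoint P)
    (hPrange : ∀ ξ : Hsp d N Ω, IsHelmholtz Ω (P ξ))
    (hPfix : ∀ v : Hsp d N Ω, IsHelmholtz Ω v → P v = v)
    (Rd : Hsp d N Ω →L[ℂ] Hsp d N Ω) (hRd : IsRes1DstarD Ω γ Rd)
    (Rds : Hsp d N Ω →L[ℂ] Hsp d N Ω) (hRds : IsRes1DDstar Ω γ Rds) :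
    Rd - Rds = P * (Rd - Rds) :=
  stmt17_general d N γ hγ Ω P hPfix Rd hRd Rds hRds
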